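/- arXiv:0912.4116 — 6 statements merged into one kernel-verified Lean document; each statement's English description precedes it below -/
import Mathlib

section
/- The function u ↦ e^{su}/(e^{e^u} + 1), as a function of the complex variable u, is meromorphic on ℂ with simple poles exactly at the points u_{n,m} = ln(π(2n+1)) + iπ(1/2 + m) for n ≥ 0 an integer and m ∈ ℤ, and the residue at u_{n,m} equals -e^{(s-1)u_{n,m}}. -/
/-!
`exp (exp u) = -1` exactly when `exp u` is an odd multiple of `π i`, and these `u` are the points
`log (π (2n+1)) + π i (1/2 + m)`. Each is a simple zero of `h u = exp (exp u) + 1`, since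
`h' u = exp (exp u) exp u = -exp u ≠ 0` there, so the residue of `exp (s u) / h u` is
`exp (s u) / (-exp u)`.
-/

open Complex Filter Topology
open scoped Real

theorem tendsto_sub_mul_div_of_hasDerivAt {𝕜 : Type*} [NontriviallyNormedField 𝕜]
    {g h : 𝕜 → 𝕜} {u h' : 𝕜} (hg : ContinuousAt g u) (hh : HasDerivAt h h' u) (hu : h u = 0)
    (hh' : h' ≠ 0) :
    Tendsto (fun z => (z - u) * (g z / h z)) (𝓝[≠] u) (𝓝 (g u / h')) := by
  have hslope : Tendsto (fun z => g z / slope h u z) (𝓝[≠] u) (𝓝 (g u / h')) :=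
    (hg.tendsto.mono_left nhdsWithin_le_nhds).div (hasDerivAt_iff_tendsto_slope.mp hh) hh'
  refine hslope.congr' (eventually_nhdsWithin_of_forall fun z hz => ?_)
  have hzu : z - u ≠ 0 := sub_ne_zero.mpr hz
  rw [slope_def_field, hu, sub_zero]
  field_simp

theorem Complex.exp_eq_neg_one_iff {w : ℂ} :
    exp w = -1 ↔ ∃ k : ℤ, w = (2 * k + 1) * π * I := by
  rw [← exp_pi_mul_I, exp_eq_exp_iff_exists_int]
  refine exists_congr fun k => ?_
  constructor <;> intro h <;> rw [h] <;> ring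

noncomputable def polePoint (n : ℕ) (m : ℤ) : ℂ :=
  (Real.log (Real.pi * (2 * n + 1)) : ℂ) + Real.pi * (1 / 2 + m) * I

theorem exp_polePoint (n : ℕ) (m : ℤ) :
    exp (polePoint n m) = (-1) ^ m * ((2 * n + 1) * π * I) := by
  have hpos : (0 : ℝ) < Real.pi * (2 * n + 1) := by positivity
  have hsplit : (π : ℂ) * (1 / 2 + m) * I = π / 2 * I + m * (π * I) := by ring
  rw [polePoint, exp_add, ← ofReal_exp, Real.exp_log hpos, hsplit, exp_add, exp_int_mul,
    exp_pi_mul_I, exp_mul_I, cos_pi_div_two, sin_pi_div_two]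
  push_cast
  ring

theorem polePoint_add_two_mul (n : ℕ) (m l : ℤ) :
    polePoint n (m + 2 * l) = polePoint n m + l * (2 * π * I) := by
  simp only [polePoint]
  push_cast
  ring

theorem exists_polePoint_iff {u : ℂ} :
    (∃ (n : ℕ) (m : ℤ), u = polePoint n m) ↔ ∃ k : ℤ, exp u = (2 * k + 1) * π * I := by
  constructor
  · rintro ⟨n, m, rfl⟩
    rw [exp_polePoint]
    rcases Int.even_or_odd m with hm | hm
    · exact ⟨n, by rw [hm.neg_one_zpow]; push_cast; ring⟩
    · exact ⟨-n - 1, by rw [hm.neg_one_zpow]; push_cast; ring⟩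
  · rintro ⟨k, hk⟩
    -- an odd integer is `(-1)^m (2n+1)` with `m = 0` or `m = 1`
    obtain ⟨n, m, hnm⟩ : ∃ (n : ℕ) (m : ℤ), exp u = exp (polePoint n m) := by
      rw [hk]
      rcases le_or_gt 0 k with hk0 | hk0
      · refine ⟨k.toNat, 0, ?_⟩
        rw [exp_polePoint, show ((k.toNat : ℕ) : ℂ) = k by exact_mod_cast Int.toNat_of_nonneg hk0]
        ring
      · refine ⟨(-k - 1).toNat, 1, ?_⟩
        rw [exp_polePoint,
          show (((-k - 1).toNat : ℕ) : ℂ) = -k - 1 by exact_mod_cast Int.toNat_of_nonneg (by omega)]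
        ring
    obtain ⟨l, hl⟩ := exp_eq_exp_iff_exists_int.mp hnm
    exact ⟨n, m + 2 * l, by rw [hl, polePoint_add_two_mul]⟩

theorem exp_exp_eq_neg_one_iff {u : ℂ} :
    exp (exp u) = -1 ↔ ∃ (n : ℕ) (m : ℤ), u = polePoint n m := by
  rw [exp_eq_neg_one_iff, exists_polePoint_iff]

theorem hasDerivAt_exp_exp_add_one_of_exp_exp_eq_neg_one {u : ℂ} (hu : exp (exp u) = -1) :
    HasDerivAt (fun z => exp (exp z) + 1) (-exp u) u := by
  have hd := ((hasDerivAt_exp (exp u)).comp u (hasDerivAt_exp u)).add_const 1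
  rwa [hu, neg_one_mul] at hd

theorem stmt_3 (s : ℂ)
    (f : ℂ → ℂ) (hf : f = fun u => Complex.exp (s * u) / (Complex.exp (Complex.exp u) + 1))
    (S : Set ℂ)
    (hS : S = {u : ℂ | ∃ n : ℕ, ∃ m : ℤ,
      u = (Real.log (Real.pi * (2 * n + 1)) : ℂ) + Real.pi * (1 / 2 + m) * Complex.I}) :
    (∀ u ∉ S, AnalyticAt ℂ f u) ∧
    (∀ u ∈ S, Tendsto (fun z => (z - u) * f z) (𝓝[≠] u)
      (𝓝 (-Complex.exp ((s - 1) * u)))) := by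
  have hS' : S = {u | exp (exp u) = -1} := by
    ext u
    rw [hS, Set.mem_ofPred_eq, Set.mem_ofPred_eq, exp_exp_eq_neg_one_iff]
    rfl
  subst hf hS'
  refine ⟨fun u hu => ?_, fun u hu => ?_⟩
  · have hne : exp (exp u) + 1 ≠ 0 := fun h0 => hu (eq_neg_of_add_eq_zero_left h0)
    fun_prop (disch := exact hne)
  · have hres := tendsto_sub_mul_div_of_hasDerivAt (g := fun z => exp (s * z))
      (by fun_prop) (hasDerivAt_exp_exp_add_one_of_exp_exp_eq_neg_one hu)
      (by rw [Set.mem_ofPred_eq.mp hu]; ring) (neg_ne_zero.mpr (exp_ne_zero u))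
    convert hres using 2
    rw [sub_mul, one_mul, exp_sub, div_neg]
end

section
/- For every positive integer N, every s ∈ ℂ, and every ỹ ∈ [0, π/2], the modulus |e^{2πN(sin ỹ - i cos ỹ)} + 1| ≥ (1/2)·e^{2πN sin ỹ}. -/
/-!
Writing `a = exp (2πN sin y)` and `θ = 2πN cos y`, the squared modulus is `a² + 2a cos θ + 1`,
which is at least `a² / 4` as soon as `cos θ ≥ 0` or `a ≥ 2`. If `cos θ < 0`, then, since
`0 ≤ θ ≤ 2πN`, the phase must stay `π/2` below `2πN`, so `1 - cos y ≥ 1/(4N)`; hence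
`sin² y ≥ 1/(4N)`, `2πN sin y ≥ 1` and `a ≥ e > 2`.
-/

open Real

theorem Complex.sq_norm_exp_add_one (z : ℂ) :
    ‖exp z + 1‖ ^ 2 = Real.exp z.re ^ 2 + 2 * Real.exp z.re * Real.cos z.im + 1 := by
  rw [Complex.sq_norm, normSq_apply]
  simp only [add_re, add_im, exp_re, exp_im, one_re, one_im, add_zero]
  linear_combination Real.exp z.re ^ 2 * Real.sin_sq_add_cos_sq z.im

theorem Complex.exp_re_div_two_le_norm_exp_add_one {z : ℂ}
    (h : 0 ≤ Real.cos z.im ∨ 2 ≤ Real.exp z.re) : Real.exp z.re / 2 ≤ ‖exp z + 1‖ := by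
  refine abs_le_of_sq_le_sq' ?_ (norm_nonneg _) |>.2
  rw [sq_norm_exp_add_one]
  have ha := Real.exp_pos z.re
  rcases h with h | h
  · nlinarith
  · nlinarith [neg_one_le_cos z.im]

theorem Real.le_two_pi_mul_sub_pi_div_two_of_cos_neg {x : ℝ} (n : ℤ) (hx : x ≤ n * (2 * π))
    (hcos : cos x < 0) : x ≤ n * (2 * π) - π / 2 := by
  by_contra! h
  have : 0 < cos (x - n * (2 * π)) := cos_pos_of_mem_Ioo ⟨by linarith, by linarith [pi_pos]⟩
  rw [cos_sub_int_mul_two_pi] at this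
  linarith

theorem Real.one_le_two_pi_mul_sin {N y : ℝ} (hsin : 0 ≤ sin y) (hcos : 0 ≤ cos y)
    (h : 2 * π * N * cos y ≤ 2 * π * N - π / 2) : 1 ≤ 2 * π * N * sin y := by
  have hgap : 1 ≤ 4 * N * (1 - cos y) := by nlinarith [pi_pos]
  have hN : 0 < N := by
    by_contra! hN
    nlinarith [mul_nonpos_of_nonpos_of_nonneg hN (sub_nonneg.2 (cos_le_one y))]
  have hsq : 1 - cos y ≤ sin y ^ 2 := by nlinarith [sin_sq_add_cos_sq y]
  have hsq1 : 1 ≤ (2 * π * N * sin y) ^ 2 :=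
    calc 1 ≤ π ^ 2 * N := by
          nlinarith [pi_gt_three, mul_le_mul_of_nonneg_left (sub_le_self 1 hcos) hN.le]
      _ ≤ π ^ 2 * N * (4 * N * (1 - cos y)) := le_mul_of_one_le_right (by positivity) hgap
      _ ≤ π ^ 2 * N * (4 * N * sin y ^ 2) := by gcongr
      _ = (2 * π * N * sin y) ^ 2 := by ring
  have hnonneg : 0 ≤ 2 * π * N * sin y := by positivity
  nlinarith

theorem stmt_6_general (N : ℕ) (y : ℝ) (hy0 : 0 ≤ y) (hy1 : y ≤ Real.pi / 2) :
    (1 / 2) * Real.exp (2 * Real.pi * N * Real.sin y) ≤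
      ‖Complex.exp ((2 * Real.pi * N : ℝ) * ((Real.sin y : ℂ) - Complex.I * Real.cos y)) + 1‖ := by
  set z : ℂ := (2 * π * N : ℝ) * ((sin y : ℂ) - Complex.I * cos y)
  have hre : z.re = 2 * π * N * sin y := by
    simp [z, Complex.sin_ofReal_re, Complex.cos_ofReal_re]
  have him : z.im = -(2 * π * N * cos y) := by
    simp [z, Complex.sin_ofReal_re, Complex.cos_ofReal_re]
  have hsin : 0 ≤ sin y := sin_nonneg_of_nonneg_of_le_pi hy0 (by linarith [pi_pos])
  have hcos : 0 ≤ cos y := cos_nonneg_of_mem_Icc ⟨by linarith [pi_pos], hy1⟩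
  rw [← hre, one_div_mul_eq_div]
  refine Complex.exp_re_div_two_le_norm_exp_add_one ((le_or_gt _ _).imp_right fun hneg => ?_)
  rw [him, cos_neg] at hneg
  have hphase : 2 * π * N * cos y ≤ 2 * π * N - π / 2 := by
    refine le_two_pi_mul_sub_pi_div_two_of_cos_neg N ?_ hneg |>.trans_eq (by push_cast; ring)
    push_cast
    nlinarith [mul_le_mul_of_nonneg_left (cos_le_one y) (by positivity : (0 : ℝ) ≤ 2 * π * N)]
  calc 2 ≤ Real.exp 1 := by linarith [add_one_le_exp 1]
    _ ≤ Real.exp z.re := exp_le_exp.2 (hre ▸ one_le_two_pi_mul_sin hsin hcos hphase)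

theorem stmt_6 (N : ℕ) (hN : 0 < N) (s : ℂ) (y : ℝ) (hy0 : 0 ≤ y) (hy1 : y ≤ Real.pi / 2) :
    (1 / 2) * Real.exp (2 * Real.pi * N * Real.sin y) ≤
      ‖Complex.exp ((2 * Real.pi * N : ℝ) * ((Real.sin y : ℂ) - Complex.I * Real.cos y)) + 1‖ :=
  stmt_6_general N y hy0 hy1
end

section
/- For complex s with Re(s) < 0 and real a with 0 < a ≤ 1, one has the Hurwitz formula ζ(s, a) = 2·Γ(1-s)·(2π)^{s-1}·Σ_{n=1}^{∞} n^{s-1}·sin(2πna + πs/2). -/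
/-!
The even and odd parts of the functional equation express `ζ(s, a)` through the periodic zeta
functions `cosZeta a (1 - s)` and `sinZeta a (1 - s)`, with factors `cos (π(1 - s)/2) = sin (πs/2)`
and `sin (π(1 - s)/2) = cos (πs/2)`. Since `Re (1 - s) > 1`, these are the convergent series
`∑ n ^ (s - 1) cos (2πna)` and `∑ n ^ (s - 1) sin (2πna)`, which the addition formula for `sin`
combines into the series of the theorem.
-/

open Complex HurwitzZeta

lemma hurwitzZeta_eq_cosZeta_sinZeta (a : UnitAddCircle) {s : ℂ} (hs : s.re < 0) :
    hurwitzZeta a s = 2 * Gamma (1 - s) * (2 * Real.pi : ℂ) ^ (s - 1) *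
      (sin (Real.pi * s / 2) * cosZeta a (1 - s) + cos (Real.pi * s / 2) * sinZeta a (1 - s)) := by
  have hs_nat : ∀ n : ℕ, 1 - s ≠ -n := fun n h => by
    have := congrArg re h
    simp only [sub_re, one_re, neg_re, natCast_re] at this
    linarith [n.cast_nonneg (α := ℝ)]
  have hs_one : 1 - s ≠ 1 := fun h => by
    rw [sub_eq_self] at h
    simp [h] at hs
  have hcos : cos (Real.pi * (1 - s) / 2) = sin (Real.pi * s / 2) := by
    rw [← cos_pi_div_two_sub]; ring_nf
  have hsin : sin (Real.pi * (1 - s) / 2) = cos (Real.pi * s / 2) := by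
    rw [← sin_pi_div_two_sub]; ring_nf
  conv_lhs => rw [← sub_sub_cancel 1 s]
  rw [hurwitzZeta, hurwitzZetaEven_one_sub a hs_nat (Or.inr hs_one),
    hurwitzZetaOdd_one_sub a hs_nat, hcos, hsin, neg_sub]
  ring

lemma hasSum_cpow_mul_sin (a : ℝ) {s : ℂ} (hs : s.re < 0) :
    HasSum (fun n : ℕ => ((n : ℂ) + 1) ^ (s - 1) *
        sin (2 * Real.pi * ((n : ℂ) + 1) * a + Real.pi * s / 2))
      (sin (Real.pi * s / 2) * cosZeta a (1 - s) + cos (Real.pi * s / 2) * sinZeta a (1 - s)) := by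
  have hre : 1 < (1 - s).re := by simp only [sub_re, one_re]; linarith
  have hsum := ((hasSum_nat_cosZeta a hre).mul_left (sin (Real.pi * s / 2))).add
    ((hasSum_nat_sinZeta a hre).mul_left (cos (Real.pi * s / 2)))
  have hzero : (0 : ℂ) ^ (1 - s) = 0 := zero_cpow fun h => by rw [h] at hre; norm_num at hre
  have hshift := (hasSum_nat_add_iff' 1).mpr hsum
  simp only [Finset.sum_range_one, Nat.cast_zero, hzero, div_zero, mul_zero, add_zero,
    sub_zero] at hshift
  refine hshift.congr_fun fun n => ?_
  rw [sin_add, show s - 1 = -(1 - s) by ring, cpow_neg]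
  push_cast
  ring_nf

theorem stmt_12_general (s : ℂ) (hs : s.re < 0) (a : ℝ) :
    HurwitzZeta.hurwitzZeta (a : UnitAddCircle) s =
      2 * Complex.Gamma (1 - s) * (2 * Real.pi : ℂ) ^ (s - 1) *
        ∑' n : ℕ, ((n : ℂ) + 1) ^ (s - 1) *
          Complex.sin (2 * Real.pi * ((n : ℂ) + 1) * a + Real.pi * s / 2) := by
  rw [hurwitzZeta_eq_cosZeta_sinZeta _ hs, (hasSum_cpow_mul_sin a hs).tsum_eq]

theorem stmt_12 (s : ℂ) (hs : s.re < 0) (a : ℝ) (ha : 0 < a) (ha' : a ≤ 1) :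
    HurwitzZeta.hurwitzZeta (a : UnitAddCircle) s =
      2 * Complex.Gamma (1 - s) * (2 * Real.pi : ℂ) ^ (s - 1) *
        ∑' n : ℕ, ((n : ℂ) + 1) ^ (s - 1) *
          Complex.sin (2 * Real.pi * ((n : ℂ) + 1) * a + Real.pi * s / 2) :=
  stmt_12_general s hs a
end

section
/- For complex s with Re(s) > 0 and real x > 0, the lower incomplete gamma function satisfies γ(s, x) = (x^s / sin(πs)) · ∫_0^π e^{x cos θ} · cos(sθ + x sin θ) dθ, provided s is not an integer. -/
/-!
Let `g(x, θ) = exp (x e^{iθ} + i s θ)` (so `x^s g = e^w w^s` on the circle `w = x e^{iθ}`) and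
`J(x) = ∫_{-π}^{π} g(x, θ) dθ`; the substitution `θ ↦ -θ` shows that the integral on the right is
`J(x) / 2`. Integrating `∂_θ g = i (x e^{iθ} + s) g` over `[-π, π]` gives
`x J'(x) + s J(x) = 2 e^{-x} sin (π s)`, that is `(x^s J(x))' = 2 sin (π s) e^{-x} x^{s-1}`.
As `x^s J(x)` vanishes at `x = 0` when `Re s > 0`, integrating from `0` to `x` yields
`x^s J(x) = 2 sin (π s) γ(s, x)`.
-/

open Complex
open Set Filter MeasureTheory
open scoped Real

theorem hasDerivAt_intervalIntegral_of_continuous_deriv {E : Type*} [NormedAddCommGroup E]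
    [NormedSpace ℝ E] {F F' : ℝ → ℝ → E} {a b x₀ : ℝ} (hF : ∀ x, Continuous (F x))
    (hF' : Continuous (Function.uncurry F'))
    (hderiv : ∀ x t, HasDerivAt (fun x => F x t) (F' x t) x) :
    HasDerivAt (fun x => ∫ t in a..b, F x t) (∫ t in a..b, F' x₀ t) x₀ := by
  obtain ⟨C, hC⟩ := ((isCompact_closedBall x₀ 1).prod (isCompact_uIcc (a := a) (b := b)))
    |>.exists_bound_of_continuousOn hF'.continuousOn
  refine (intervalIntegral.hasDerivAt_integral_of_dominated_loc_of_deriv_le (bound := fun _ => C)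
    (Metric.ball_mem_nhds x₀ one_pos) (Eventually.of_forall fun x => (hF x).aestronglyMeasurable)
    ((hF x₀).intervalIntegrable _ _) ?_ ?_ intervalIntegrable_const ?_).2
  · exact (hF'.comp (Continuous.prodMk_right x₀)).aestronglyMeasurable
  · exact Eventually.of_forall fun t ht x hx =>
      hC (x, t) ⟨Metric.ball_subset_closedBall hx, uIoc_subset_uIcc ht⟩
  · exact Eventually.of_forall fun t _ x _ => hderiv x t

noncomputable def gammaCircleKernel (s : ℂ) (x θ : ℝ) : ℂ :=
  exp (x * exp (θ * I) + s * θ * I)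

noncomputable def gammaCircleIntegral (s : ℂ) (x : ℝ) : ℂ :=
  ∫ θ in -π..π, gammaCircleKernel s x θ

section GammaCircle

variable (s : ℂ)

theorem continuous_gammaCircleKernel (x : ℝ) : Continuous (gammaCircleKernel s x) := by
  unfold gammaCircleKernel
  fun_prop

theorem hasDerivAt_gammaCircleKernel_radius (x θ : ℝ) :
    HasDerivAt (fun y => gammaCircleKernel s y θ) (exp (θ * I) * gammaCircleKernel s x θ) x := by
  have := (((hasDerivAt_id x).ofReal_comp.mul_const (exp (θ * I))).add_const (s * θ * I)).cexp
  simpa [gammaCircleKernel, mul_comm] using this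

theorem hasDerivAt_gammaCircleKernel_angle (x θ : ℝ) :
    HasDerivAt (gammaCircleKernel s x)
      ((x * exp (θ * I) + s) * I * gammaCircleKernel s x θ) θ := by
  have hexp : HasDerivAt (fun y : ℝ => exp (y * I)) (exp (θ * I) * I) θ := by
    simpa using (((hasDerivAt_id (θ : ℂ)).mul_const I).cexp).comp_ofReal
  have hlin : HasDerivAt (fun y : ℝ => s * y * I) (s * I) θ := by
    simpa using ((hasDerivAt_id θ).ofReal_comp.const_mul s).mul_const I
  convert ((hexp.const_mul (x : ℂ)).add hlin).cexp using 1
  · rfl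
  · simp only [gammaCircleKernel, Pi.add_apply]
    ring

theorem gammaCircleKernel_eq (x θ : ℝ) :
    gammaCircleKernel s x θ = exp (x * Real.cos θ + (s * θ + x * Real.sin θ) * I) := by
  rw [gammaCircleKernel, exp_mul_I, ← ofReal_cos, ← ofReal_sin]
  push_cast
  ring_nf

theorem gammaCircleKernel_pi_sub_neg_pi (x : ℝ) :
    gammaCircleKernel s x π - gammaCircleKernel s x (-π) =
      2 * I * Real.exp (-x) * sin (π * s) := by
  have hpi : gammaCircleKernel s x π = exp (-x) * exp (π * s * I) := by
    rw [gammaCircleKernel, ← exp_add, exp_pi_mul_I]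
    ring_nf
  have hnegpi : gammaCircleKernel s x (-π) = exp (-x) * exp (-(π * s * I)) := by
    rw [gammaCircleKernel, ← exp_add, ofReal_neg, neg_mul, exp_neg, exp_pi_mul_I]
    ring_nf
  rw [hpi, hnegpi, sin, neg_mul, ofReal_exp, ofReal_neg]
  linear_combination (exp (-x) * (exp (π * s * I) - exp (-(π * s * I)))) * I_sq

theorem hasDerivAt_gammaCircleIntegral (x : ℝ) :
    HasDerivAt (gammaCircleIntegral s)
      (∫ θ in -π..π, exp (θ * I) * gammaCircleKernel s x θ) x :=
  hasDerivAt_intervalIntegral_of_continuous_deriv (continuous_gammaCircleKernel s)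
    (by unfold gammaCircleKernel; fun_prop) (fun y θ => hasDerivAt_gammaCircleKernel_radius s y θ)

theorem mul_deriv_add_mul_gammaCircleIntegral (x : ℝ) :
    x * (∫ θ in -π..π, exp (θ * I) * gammaCircleKernel s x θ) + s * gammaCircleIntegral s x =
      2 * Real.exp (-x) * sin (π * s) := by
  have hcont := continuous_gammaCircleKernel s x
  have hFTC : ∫ θ in -π..π, (x * exp (θ * I) + s) * I * gammaCircleKernel s x θ =
      2 * I * Real.exp (-x) * sin (π * s) := by
    rw [← gammaCircleKernel_pi_sub_neg_pi]
    exact intervalIntegral.integral_eq_sub_of_hasDerivAt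
      (fun θ _ => hasDerivAt_gammaCircleKernel_angle s x θ)
      (Continuous.intervalIntegrable (by fun_prop) _ _)
  have hsplit : ∫ θ in -π..π, (x * exp (θ * I) + s) * I * gammaCircleKernel s x θ =
      I * (x * ∫ θ in -π..π, exp (θ * I) * gammaCircleKernel s x θ) +
        I * (s * gammaCircleIntegral s x) := by
    simp only [gammaCircleIntegral, ← intervalIntegral.integral_const_mul]
    rw [← intervalIntegral.integral_add]
    · congr 1; ext θ; ring
    all_goals exact Continuous.intervalIntegrable (by fun_prop) _ _
  apply mul_left_cancel₀ I_ne_zero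
  linear_combination hsplit.symm.trans hFTC

theorem hasDerivAt_cpow_mul_gammaCircleIntegral {x : ℝ} (hx : 0 < x) :
    HasDerivAt (fun y : ℝ => (y : ℂ) ^ s * gammaCircleIntegral s y)
      (2 * sin (π * s) * (Real.exp (-x) * (x : ℂ) ^ (s - 1))) x := by
  have hpow : HasDerivAt (fun y : ℝ => (y : ℂ) ^ s) (s * (x : ℂ) ^ (s - 1)) x :=
    (hasStrictDerivAt_cpow_const (ofReal_mem_slitPlane.mpr hx)).hasDerivAt.comp_ofReal
  have hx' : (x : ℂ) ^ s = (x : ℂ) ^ (s - 1) * x := by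
    conv_lhs => rw [← sub_add_cancel s 1]
    rw [cpow_add _ _ (ofReal_ne_zero.mpr hx.ne'), cpow_one]
  refine (hpow.mul (hasDerivAt_gammaCircleIntegral s x)).congr_deriv ?_
  rw [hx']
  linear_combination (x : ℂ) ^ (s - 1) * mul_deriv_add_mul_gammaCircleIntegral s x

theorem integral_exp_mul_cos_eq_half_gammaCircleIntegral (x : ℝ) :
    ∫ θ in (0 : ℝ)..π, Real.exp (x * Real.cos θ) * cos (s * θ + x * Real.sin θ) =
      gammaCircleIntegral s x / 2 := by
  have hcont := continuous_gammaCircleKernel s x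
  have hsymm : ∀ θ : ℝ, (Real.exp (x * Real.cos θ) : ℂ) * cos (s * θ + x * Real.sin θ) =
      (gammaCircleKernel s x θ + gammaCircleKernel s x (-θ)) / 2 := by
    intro θ
    rw [gammaCircleKernel_eq, gammaCircleKernel_eq, Real.cos_neg, Real.sin_neg, cos, ofReal_exp,
      ← mul_div_assoc, mul_add, ← exp_add, ← exp_add]
    push_cast
    ring_nf
  have hreflect : ∫ θ in (0 : ℝ)..π, gammaCircleKernel s x (-θ) =
      ∫ θ in -π..0, gammaCircleKernel s x θ := by
    rw [intervalIntegral.integral_comp_neg, neg_zero]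
  simp_rw [hsymm]
  rw [intervalIntegral.integral_div, intervalIntegral.integral_add (hcont.intervalIntegrable _ _)
    (Continuous.intervalIntegrable (by fun_prop) _ _), hreflect, add_comm,
    intervalIntegral.integral_add_adjacent_intervals (hcont.intervalIntegrable _ _)
      (hcont.intervalIntegrable _ _), gammaCircleIntegral]

end GammaCircle

theorem two_mul_sin_mul_partialGamma {s : ℂ} (hs : 0 < s.re) {x : ℝ} (hx : 0 ≤ x) :
    2 * sin (π * s) * partialGamma s x = (x : ℂ) ^ s * gammaCircleIntegral s x := by
  have hcont : ContinuousOn (fun y : ℝ => (y : ℂ) ^ s * gammaCircleIntegral s y) (Icc 0 x) :=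
    fun y _ => ((continuousAt_ofReal_cpow_const y s (Or.inl hs)).mul
      (hasDerivAt_gammaCircleIntegral s y).continuousAt).continuousWithinAt
  have hint :
      IntervalIntegrable (fun t : ℝ => (Real.exp (-t) : ℂ) * (t : ℂ) ^ (s - 1)) volume 0 x :=
    (intervalIntegrable_iff_integrableOn_Ioc_of_le hx).mpr
      ((GammaIntegral_convergent hs).mono_set Ioc_subset_Ioi_self)
  have hFTC := intervalIntegral.integral_eq_sub_of_hasDerivAt_of_le hx hcont
    (fun y hy => hasDerivAt_cpow_mul_gammaCircleIntegral s hy.1) (hint.const_mul (2 * sin (π * s)))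
  rwa [intervalIntegral.integral_const_mul, ofReal_zero, zero_cpow (ne_zero_of_re_pos hs),
    zero_mul, sub_zero] at hFTC

theorem stmt_13 (s : ℂ) (hs : 0 < s.re) (x : ℝ) (hx : 0 < x) (hsi : ∀ n : ℤ, s ≠ n) :
    Complex.partialGamma s x =
      (x : ℂ) ^ s / Complex.sin (Real.pi * s) *
        ∫ θ in (0:ℝ)..Real.pi,
          Real.exp (x * Real.cos θ) * Complex.cos (s * θ + x * Real.sin θ) := by
  have hsin : sin (π * s) ≠ 0 := by
    rw [Ne, sin_eq_zero_iff]
    rintro ⟨k, hk⟩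
    exact hsi k (mul_left_cancel₀ (ofReal_ne_zero.mpr Real.pi_ne_zero) (hk.trans (mul_comm _ _)))
  rw [integral_exp_mul_cos_eq_half_gammaCircleIntegral, div_mul_eq_mul_div, eq_div_iff hsin]
  linear_combination two_mul_sin_mul_partialGamma hs hx.le / 2
end

section
/- For complex s with Re(s) > 0, real x > 0, and nonzero integer m such that ms is not an integer, (1 - e^{2πims})·γ(s, x) = -i·x^s·∫_0^{2πm} e^{isy}·e^{-x(cos y + i sin y)} dy. -/
open Complex MeasureTheory Set Filter

/-!
Fix `c` with `e^{ic} = 1` and let `J(u) = ∫₀^c e^{isy} e^{-u e^{iy}} dy`, and consider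
`D(u) = (1 - e^{isc}) γ(s, u) + i u^s J(u)`. Its integrand `A(u, y)` satisfies
`∂_y A = i s A + i u ∂_u A`, so `(u^s J)' = u^{s-1} ∫₀^c ∂_y A dy = u^{s-1} (e^{isc} - 1) e^{-u}`,
which cancels `γ'(s, u) = e^{-u} u^{s-1}`. Hence `D` is constant on `[0, ∞)`, and `D(0) = 0`
because `Re s > 0`.
-/

section ParametricIntegral

variable {E : Type*} [NormedAddCommGroup E] [NormedSpace ℝ E]

theorem hasDerivAt_intervalIntegral_of_continuous {F F' : ℝ → ℝ → E}
    (hF : Continuous (Function.uncurry F)) (hF' : Continuous (Function.uncurry F'))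
    (hderiv : ∀ v y, HasDerivAt (F · y) (F' v y) v) (a b u : ℝ) :
    HasDerivAt (fun v => ∫ y in a..b, F v y) (∫ y in a..b, F' u y) u := by
  have hsection : ∀ {G : ℝ → ℝ → E}, Continuous (Function.uncurry G) → ∀ v, Continuous (G v) :=
    fun hG v => hG.comp (continuous_const.prodMk continuous_id)
  obtain ⟨C, hC⟩ := ((isCompact_closedBall u 1).prod isCompact_uIcc).exists_bound_of_continuousOn
    hF'.continuousOn
  refine (intervalIntegral.hasDerivAt_integral_of_dominated_loc_of_deriv_le (bound := fun _ => C)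
    (Metric.ball_mem_nhds u one_pos)
    (Eventually.of_forall fun v => (hsection hF v).aestronglyMeasurable)
    ((hsection hF u).intervalIntegrable _ _) (hsection hF' u).aestronglyMeasurable
    (ae_of_all _ fun y hy v hv => hC (v, y) ⟨Metric.ball_subset_closedBall hv, uIoc_subset_uIcc hy⟩)
    intervalIntegrable_const (ae_of_all _ fun y _ v _ => hderiv v y)).2

end ParametricIntegral

/-- Substituting `w = u e^{iy}` turns `e^{-w} w^{s-1} dw` into
`i u^s · gammaArcIntegrand s u y dy`. -/
noncomputable def gammaArcIntegrand (s : ℂ) (u y : ℝ) : ℂ :=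
  exp (I * s * y) * exp (-u * exp (I * y))

section GammaArcIntegrand

variable (s : ℂ)

theorem continuous_gammaArcIntegrand : Continuous (Function.uncurry (gammaArcIntegrand s)) := by
  unfold gammaArcIntegrand; fun_prop

theorem hasDerivAt_gammaArcIntegrand_left (u y : ℝ) :
    HasDerivAt (gammaArcIntegrand s · y) (-exp (I * y) * gammaArcIntegrand s u y) u := by
  have h := ((((hasDerivAt_id (u : ℂ)).neg.mul_const (exp (I * y))).cexp).const_mul
    (exp (I * s * y))).comp_ofReal
  refine h.congr_deriv ?_
  simp only [gammaArcIntegrand, Pi.neg_apply, id_eq]; ring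

theorem hasDerivAt_gammaArcIntegrand_right (u y : ℝ) :
    HasDerivAt (gammaArcIntegrand s u)
      (I * s * gammaArcIntegrand s u y + I * u * (-exp (I * y) * gammaArcIntegrand s u y)) y := by
  have h₁ := ((hasDerivAt_id (y : ℂ)).const_mul (I * s)).cexp.comp_ofReal
  have h₂ := (((hasDerivAt_id (y : ℂ)).const_mul I).cexp.const_mul (-(u : ℂ))).cexp.comp_ofReal
  refine (h₁.mul h₂).congr_deriv ?_
  simp only [gammaArcIntegrand, id_eq]; ring

theorem hasDerivAt_integral_gammaArcIntegrand (c u : ℝ) :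
    HasDerivAt (fun v => ∫ y in (0 : ℝ)..c, gammaArcIntegrand s v y)
      (∫ y in (0 : ℝ)..c, -exp (I * y) * gammaArcIntegrand s u y) u :=
  hasDerivAt_intervalIntegral_of_continuous (continuous_gammaArcIntegrand s)
    (by unfold gammaArcIntegrand; fun_prop) (hasDerivAt_gammaArcIntegrand_left s) 0 c u

theorem hasDerivAt_cpow_mul_integral_gammaArcIntegrand (c : ℝ) {u : ℝ} (hu : 0 < u) :
    HasDerivAt (fun v : ℝ => I * (v : ℂ) ^ s * ∫ y in (0 : ℝ)..c, gammaArcIntegrand s v y)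
      ((u : ℂ) ^ (s - 1) * (gammaArcIntegrand s u c - gammaArcIntegrand s u 0)) u := by
  have hpow : HasDerivAt (fun v : ℝ => (v : ℂ) ^ s) (s * (u : ℂ) ^ (s - 1)) u := by
    simpa using ((hasDerivAt_id (u : ℂ)).cpow_const (c := s)
      (ofReal_mem_slitPlane.2 hu)).comp_ofReal
  have hA : Continuous (gammaArcIntegrand s u) := by unfold gammaArcIntegrand; fun_prop
  have hFTC := intervalIntegral.integral_eq_sub_of_hasDerivAt (a := 0) (b := c)
    (fun y _ => hasDerivAt_gammaArcIntegrand_right s u y)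
    (by apply Continuous.intervalIntegrable; fun_prop)
  rw [intervalIntegral.integral_add (by apply Continuous.intervalIntegrable; fun_prop)
    (by apply Continuous.intervalIntegrable; fun_prop),
    intervalIntegral.integral_const_mul, intervalIntegral.integral_const_mul] at hFTC
  have hu₀ : (u : ℂ) ≠ 0 := ofReal_ne_zero.2 hu.ne'
  have hpow_eq : (u : ℂ) ^ s = (u : ℂ) ^ (s - 1) * u := by
    rw [cpow_sub _ _ hu₀, cpow_one, div_mul_cancel₀ _ hu₀]
  refine ((hpow.const_mul I).mul (hasDerivAt_integral_gammaArcIntegrand s c u)).congr_deriv ?_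
  rw [← hFTC, hpow_eq]; ring

end GammaArcIntegrand

section PartialGamma

variable {s : ℂ}

theorem hasDerivAt_partialGamma (hs : 0 < s.re) {u : ℝ} (hu : 0 < u) :
    HasDerivAt (partialGamma s) (Real.exp (-u) * (u : ℂ) ^ (s - 1)) u := by
  have hint := (GammaIntegral_convergent hs).mono_set (Ioc_subset_Ioi_self (a := u) (b := 0))
  refine intervalIntegral.integral_hasDerivAt_right
    ((intervalIntegrable_iff_integrableOn_Ioc_of_le hu.le).2 hint)
    ⟨Ioi 0, Ioi_mem_nhds hu, (GammaIntegral_convergent hs).1⟩ ?_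
  exact (by fun_prop : Continuous fun t : ℝ => ((Real.exp (-t) : ℝ) : ℂ)).continuousAt.mul
    ((continuousAt_cpow_const (ofReal_mem_slitPlane.2 hu)).comp continuous_ofReal.continuousAt)

theorem continuousOn_partialGamma (hs : 0 < s.re) {x : ℝ} (hx : 0 ≤ x) :
    ContinuousOn (partialGamma s) (Icc 0 x) := by
  have hint := (GammaIntegral_convergent hs).mono_set (Ioc_subset_Ioi_self (a := x) (b := 0))
  rw [← uIcc_of_le hx]
  exact intervalIntegral.continuousOn_primitive_interval'
    ((intervalIntegrable_iff_integrableOn_Ioc_of_le hx).2 hint) left_mem_uIcc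

end PartialGamma

theorem one_sub_cexp_mul_partialGamma_eq (s : ℂ) (hs : 0 < s.re) {x : ℝ} (hx : 0 < x) {c : ℝ}
    (hc : exp (I * c) = 1) :
    (1 - exp (I * s * c)) * partialGamma s x =
      -I * (x : ℂ) ^ s * ∫ y in (0 : ℝ)..c, gammaArcIntegrand s x y := by
  set D : ℝ → ℂ := fun v => (1 - exp (I * s * c)) * partialGamma s v +
    I * (v : ℂ) ^ s * ∫ y in (0 : ℝ)..c, gammaArcIntegrand s v y
  have hD₀ : D 0 = 0 := by
    simp [D, partialGamma, zero_cpow (ne_zero_of_re_pos hs)]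
  have hJ : Continuous fun v => ∫ y in (0 : ℝ)..c, gammaArcIntegrand s v y :=
    continuous_iff_continuousAt.2 fun u => (hasDerivAt_integral_gammaArcIntegrand s c u).continuousAt
  have hcont : ContinuousOn D (Icc 0 x) :=
    (continuousOn_const.mul (continuousOn_partialGamma hs hx.le)).add
      ((continuous_const.mul (continuous_ofReal_cpow_const hs)).mul hJ).continuousOn
  have hderiv : ∀ u ∈ Ioo 0 x, HasDerivAt D 0 u := by
    intro u hu
    refine (((hasDerivAt_partialGamma hs hu.1).const_mul _).add
      (hasDerivAt_cpow_mul_integral_gammaArcIntegrand s c hu.1)).congr_deriv ?_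
    simp only [gammaArcIntegrand, hc, ofReal_zero, mul_zero, mul_one, exp_zero, ofReal_exp,
      ofReal_neg]
    ring
  have hDx : D x = 0 := by
    simpa [hD₀, sub_eq_zero, eq_comm] using
      intervalIntegral.integral_eq_sub_of_hasDerivAt_of_le hx.le hcont hderiv intervalIntegrable_const
  linear_combination hDx

theorem stmt_15_general (s : ℂ) (hs : 0 < s.re) (x : ℝ) (hx : 0 < x) (m : ℤ) :
    (1 - Complex.exp (2 * Real.pi * Complex.I * m * s)) * Complex.partialGamma s x =
      -Complex.I * (x : ℂ) ^ s *
        ∫ y in (0:ℝ)..(2 * Real.pi * m),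
          Complex.exp (Complex.I * s * y) *
            Complex.exp (-(x : ℂ) * (Real.cos y + Complex.I * Real.sin y)) := by
  have hc : exp (I * ↑(2 * Real.pi * m)) = 1 := by
    rw [← exp_int_mul_two_pi_mul_I m]; push_cast; ring_nf
  have hcis : ∀ y : ℝ, (Real.cos y + I * Real.sin y : ℂ) = exp (I * y) := by
    intro y; rw [mul_comm I (y : ℂ), exp_mul_I, ofReal_cos, ofReal_sin, mul_comm I]
  have hcs : exp (I * s * ↑(2 * Real.pi * m)) = exp (2 * Real.pi * I * m * s) := by
    push_cast; ring_nf
  rw [← hcs, one_sub_cexp_mul_partialGamma_eq s hs hx hc]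
  simp only [gammaArcIntegrand, hcis]

theorem stmt_15 (s : ℂ) (hs : 0 < s.re) (x : ℝ) (hx : 0 < x) (m : ℤ) (hm : m ≠ 0)
    (hms : ∀ k : ℤ, (m : ℂ) * s ≠ k) :
    (1 - Complex.exp (2 * Real.pi * Complex.I * m * s)) * Complex.partialGamma s x =
      -Complex.I * (x : ℂ) ^ s *
        ∫ y in (0:ℝ)..(2 * Real.pi * m),
          Complex.exp (Complex.I * s * y) *
            Complex.exp (-(x : ℂ) * (Real.cos y + Complex.I * Real.sin y)) :=
  stmt_15_general s hs x hx m
end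

section
/- For complex x, y with Re(x) > 0, Re(y) > 0, and x not an integer, the beta function satisfies (1 - e^{2πix})·B(x, y) = -i·∫_0^{2π} e^{ixθ}·(1 - cos θ - i sin θ)^{y-1} dθ. -/
/-!
For `0 ≤ θ ≤ 2π` let `g θ = e^{ixθ} ∫₀¹ t^{x-1} (1 - t e^{iθ})^{y-1} dt`, the beta integral taken
along the segment `[0, e^{iθ}]`, so that `g 0 = B(x, y)` and `g (2π) = e^{2πix} B(x, y)`.
For `0 < θ < 2π` the segment stays away from the branch point `1`, so one may differentiate under
the integral sign, and an integration by parts in `t` collapses `g' θ` to the boundary term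
`i e^{ixθ} (1 - e^{iθ})^{y-1}`. The identity is then the fundamental theorem of calculus for `g`
on `[0, 2π]`. All integrals converge because `|1 - t e^{iθ}| ≥ max (1 - t) ((1 - cos θ) / 2)`
and `|1 - e^{iθ}| ≥ θ (2π - θ) / π²`.
-/

open Complex MeasureTheory Set Real Filter
open scoped Interval Topology

lemma ae_imp_of_forall_Ioo {P : ℝ → Prop} {a b : ℝ} (hab : a ≤ b) (h : ∀ t ∈ Ioo a b, P t) :
    ∀ᵐ t ∂volume, t ∈ Ι a b → P t := by
  filter_upwards [compl_mem_ae_iff.mpr (measure_singleton b)] with t htb ht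
  rw [uIoc_of_le hab] at ht
  exact h t ⟨ht.1, lt_of_le_of_ne ht.2 htb⟩

lemma IntervalIntegrable.of_norm_le_on_Ioo {E : Type*} [NormedAddCommGroup E] {f : ℝ → E}
    {g : ℝ → ℝ} {a b : ℝ} (hab : a ≤ b) (hg : IntervalIntegrable g volume a b)
    (hf : AEStronglyMeasurable f (volume.restrict (Ι a b))) (h : ∀ t ∈ Ioo a b, ‖f t‖ ≤ g t) :
    IntervalIntegrable f volume a b :=
  hg.mono_fun' hf ((ae_restrict_iff' measurableSet_uIoc).mpr (ae_imp_of_forall_Ioo hab h))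

lemma intervalIntegrable_rpow_mul_one_sub_rpow {a b : ℝ} (ha : -1 < a) (hb : -1 < b) :
    IntervalIntegrable (fun t : ℝ => t ^ a * (1 - t) ^ b) volume 0 1 := by
  have hbeta := (betaIntegral_convergent (u := a + 1) (v := b + 1)
    (by simp; linarith) (by simp; linarith)).norm
  refine hbeta.of_norm_le_on_Ioo zero_le_one (by fun_prop) fun t ht => le_of_eq ?_
  have h1t : (1 - (t : ℂ)) = ((1 - t : ℝ) : ℂ) := by push_cast; ring
  have ht1 : 0 < 1 - t := by linarith [ht.2]
  rw [Real.norm_of_nonneg (by have := ht.1; positivity), h1t, norm_mul,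
    norm_cpow_eq_rpow_re_of_pos ht.1, norm_cpow_eq_rpow_re_of_pos ht1]
  simp

lemma norm_cpow_le_of_le_norm_le {w : ℂ} {m M : ℝ} (hm : 0 < m) (hmw : m ≤ ‖w‖) (hwM : ‖w‖ ≤ M)
    (z : ℂ) : ‖w ^ z‖ ≤ (m ^ z.re + M ^ z.re) * Real.exp (π * |z.im|) := by
  have hw : 0 < ‖w‖ := hm.trans_le hmw
  have hrpow : ‖w‖ ^ z.re ≤ m ^ z.re + M ^ z.re := by
    rcases le_or_gt z.re 0 with hz | hz
    · linarith [Real.rpow_le_rpow_of_nonpos hm hmw hz,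
        Real.rpow_nonneg (hm.le.trans (hmw.trans hwM)) z.re]
    · linarith [Real.rpow_le_rpow hw.le hwM hz.le, Real.rpow_nonneg hm.le z.re]
  have harg : -(arg w * z.im) ≤ π * |z.im| := by
    calc -(arg w * z.im) ≤ |arg w| * |z.im| := by rw [← abs_mul]; exact neg_le_abs _
      _ ≤ π * |z.im| := by gcongr; exact abs_arg_le_pi w
  calc ‖w ^ z‖ ≤ ‖w‖ ^ z.re / Real.exp (arg w * z.im) := norm_cpow_le w z
    _ = ‖w‖ ^ z.re * Real.exp (-(arg w * z.im)) := by rw [Real.exp_neg, div_eq_mul_inv]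
    _ ≤ (m ^ z.re + M ^ z.re) * Real.exp (π * |z.im|) := by
      gcongr
      exact (Real.rpow_nonneg hw.le _).trans hrpow

lemma two_mul_mul_pi_sub_div_sq_le_sin {v : ℝ} (h0 : 0 ≤ v) (h1 : v ≤ π) :
    2 * v * (π - v) / π ^ 2 ≤ Real.sin v := by
  have hpi := Real.pi_pos
  rw [div_le_iff₀ (by positivity)]
  rcases le_total v (π / 2) with hv | hv
  · have := Real.mul_le_sin h0 hv
    rw [div_mul_eq_mul_div, div_le_iff₀ hpi] at this
    nlinarith
  · have := Real.mul_le_sin (x := π - v) (by linarith) (by linarith)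
    rw [Real.sin_pi_sub, div_mul_eq_mul_div, div_le_iff₀ hpi] at this
    nlinarith

lemma cos_lt_one_of_mem_Ioo {θ : ℝ} (h0 : 0 < θ) (h1 : θ < 2 * π) : Real.cos θ < 1 :=
  (Real.cos_le_one θ).lt_of_ne fun h =>
    h0.ne' ((Real.cos_eq_one_iff_of_lt_of_lt (by linarith [Real.pi_pos]) h1).mp h)

section UnitCircle

variable {t θ : ℝ}

lemma re_one_sub_mul_exp (t θ : ℝ) : (1 - t * cexp (θ * I)).re = 1 - t * Real.cos θ := by
  simp [exp_ofReal_mul_I_re]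

lemma one_sub_le_re_one_sub_mul_exp (ht : 0 ≤ t) : 1 - t ≤ (1 - t * cexp (θ * I)).re := by
  rw [re_one_sub_mul_exp]
  nlinarith [Real.cos_le_one θ]

lemma re_one_sub_mul_exp_pos (ht0 : 0 ≤ t) (ht1 : t < 1) : 0 < (1 - t * cexp (θ * I)).re :=
  lt_of_lt_of_le (by linarith) (one_sub_le_re_one_sub_mul_exp ht0)

lemma one_sub_cos_div_two_le_re_one_sub_mul_exp (ht0 : 0 ≤ t) (ht1 : t ≤ 1) :
    (1 - Real.cos θ) / 2 ≤ (1 - t * cexp (θ * I)).re := by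
  rw [re_one_sub_mul_exp]
  nlinarith [Real.cos_le_one θ, Real.neg_one_le_cos θ]

lemma norm_one_sub_mul_exp_le_two (ht0 : 0 ≤ t) (ht1 : t ≤ 1) : ‖1 - t * cexp (θ * I)‖ ≤ 2 := by
  calc ‖1 - t * cexp (θ * I)‖ ≤ ‖(1 : ℂ)‖ + ‖(t : ℂ) * cexp (θ * I)‖ := norm_sub_le _ _
    _ ≤ 2 := by
      rw [norm_mul, norm_exp_ofReal_mul_I, norm_one, norm_real, Real.norm_of_nonneg ht0]
      linarith

lemma mul_mul_one_sub_le_norm_one_sub_exp (h0 : 0 ≤ θ) (h1 : θ ≤ 2 * π) :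
    4 * (θ / (2 * π)) * (1 - θ / (2 * π)) ≤ ‖1 - cexp (θ * I)‖ := by
  have hpi := Real.pi_pos
  have hsin := two_mul_mul_pi_sub_div_sq_le_sin (v := θ / 2) (by linarith) (by linarith)
  rw [norm_sub_rev, mul_comm (θ : ℂ), norm_exp_I_mul_ofReal_sub_one, norm_mul, Real.norm_two,
    Real.norm_eq_abs]
  calc 4 * (θ / (2 * π)) * (1 - θ / (2 * π)) = 2 * (2 * (θ / 2) * (π - θ / 2) / π ^ 2) := by
        field_simp; ring
    _ ≤ 2 * |Real.sin (θ / 2)| := by gcongr; exact hsin.trans (le_abs_self _)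

end UnitCircle

noncomputable def rayPow (a b : ℂ) (θ t : ℝ) : ℂ := (t : ℂ) ^ a * (1 - t * cexp (θ * I)) ^ b

noncomputable def rayBeta (x y : ℂ) (θ : ℝ) : ℂ := ∫ t in (0 : ℝ)..1, rayPow (x - 1) (y - 1) θ t

section RayPow

variable {a b : ℂ} {θ t : ℝ}

lemma measurable_rayPow (a b : ℂ) (θ : ℝ) : Measurable (rayPow a b θ) := by
  unfold rayPow; fun_prop

lemma norm_rayPow (ht : 0 < t) : ‖rayPow a b θ t‖ = t ^ a.re * ‖(1 - t * cexp (θ * I)) ^ b‖ := by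
  rw [rayPow, norm_mul, norm_cpow_eq_rpow_re_of_pos ht]

lemma norm_rayPow_le (ht : t ∈ Ioo 0 1) :
    ‖rayPow a b θ t‖ ≤ t ^ a.re * (((1 - t) ^ b.re + 2 ^ b.re) * Real.exp (π * |b.im|)) := by
  rw [norm_rayPow ht.1]
  exact mul_le_mul_of_nonneg_left (norm_cpow_le_of_le_norm_le (by linarith [ht.2])
    ((one_sub_le_re_one_sub_mul_exp ht.1.le).trans (re_le_norm _))
    (norm_one_sub_mul_exp_le_two ht.1.le ht.2.le) b) (Real.rpow_nonneg ht.1.le _)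

lemma norm_rayPow_le_of_cos_le {c : ℝ} (hc : c < 1) (ha : 0 ≤ a.re) (ht : t ∈ Ioo 0 1)
    (hθ : Real.cos θ ≤ c) :
    ‖rayPow a b θ t‖ ≤ (((1 - c) / 2) ^ b.re + 2 ^ b.re) * Real.exp (π * |b.im|) := by
  rw [norm_rayPow ht.1]
  have hta : t ^ a.re ≤ 1 := Real.rpow_le_one ht.1.le ht.2.le ha
  have hw := norm_cpow_le_of_le_norm_le (m := (1 - c) / 2) (by linarith) (le_trans (by linarith)
    ((one_sub_cos_div_two_le_re_one_sub_mul_exp ht.1.le ht.2.le).trans (re_le_norm _)))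
    (norm_one_sub_mul_exp_le_two (θ := θ) ht.1.le ht.2.le) b
  calc t ^ a.re * ‖(1 - t * cexp (θ * I)) ^ b‖ ≤ 1 * ‖(1 - t * cexp (θ * I)) ^ b‖ := by gcongr
    _ ≤ _ := by rw [one_mul]; exact hw

lemma continuousOn_rayPow (ha : 0 < a.re) (b : ℂ) (hθ : Real.cos θ < 1) :
    ContinuousOn (rayPow a b θ) (Icc 0 1) := by
  refine continuousOn_of_forall_continuousAt fun t ht => ?_
  refine (continuousAt_ofReal_cpow_const t a (Or.inl ha)).mul
    (ContinuousAt.cpow (by fun_prop) continuousAt_const (Or.inl ?_))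
  linarith [one_sub_cos_div_two_le_re_one_sub_mul_exp (θ := θ) ht.1 ht.2]

lemma hasDerivAt_rayPow_angle (a b : ℂ) (ht : t ∈ Ioo 0 1) (θ : ℝ) :
    HasDerivAt (fun θ => rayPow a b θ t)
      (-I * b * cexp (θ * I) * rayPow (a + 1) (b - 1) θ t) θ := by
  have hexp : HasDerivAt (fun z : ℂ => 1 - t * cexp (z * I)) (-(t * (cexp (θ * I) * I))) θ := by
    simpa using (((hasDerivAt_id (θ : ℂ)).mul_const I).cexp.const_mul (t : ℂ)).const_sub 1
  have hpow := ((hexp.cpow_const (c := b)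
    (Or.inl (re_one_sub_mul_exp_pos ht.1.le ht.2))).comp_ofReal).const_mul ((t : ℂ) ^ a)
  have ht0 : (t : ℂ) ≠ 0 := ofReal_ne_zero.mpr ht.1.ne'
  refine hpow.congr_deriv ?_
  rw [rayPow, cpow_add _ _ ht0, cpow_one]
  ring

lemma hasDerivAt_rayPow_radius (a b : ℂ) (θ : ℝ) (ht : 0 < t)
    (hre : 0 < (1 - t * cexp (θ * I)).re) :
    HasDerivAt (rayPow a b θ)
      (a * rayPow (a - 1) b θ t - b * cexp (θ * I) * rayPow a (b - 1) θ t) t := by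
  have hta : HasDerivAt (fun z : ℂ => z ^ a) (a * (t : ℂ) ^ (a - 1)) t := by
    simpa using (hasDerivAt_id (t : ℂ)).cpow_const (c := a) (Or.inl (by simpa using ht))
  have hlin : HasDerivAt (fun z : ℂ => 1 - z * cexp (θ * I)) (-cexp (θ * I)) t := by
    simpa using ((hasDerivAt_id (t : ℂ)).mul_const (cexp (θ * I))).const_sub 1
  refine (hta.comp_ofReal.mul
    (hlin.cpow_const (c := b) (Or.inl hre)).comp_ofReal).congr_deriv ?_
  simp only [rayPow]
  ring

end RayPow

section RayBeta

variable {a b x y : ℂ}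

lemma intervalIntegrable_rayPow_majorant (ha : -1 < a.re) (hb : -1 < b.re) :
    IntervalIntegrable (fun t : ℝ => t ^ a.re *
      (((1 - t) ^ b.re + 2 ^ b.re) * Real.exp (π * |b.im|))) volume 0 1 := by
  simp only [mul_add, add_mul, ← mul_assoc]
  exact ((intervalIntegrable_rpow_mul_one_sub_rpow ha hb).mul_const _).add
    ((intervalIntegral.intervalIntegrable_rpow' ha).mul_const _ |>.mul_const _)

lemma intervalIntegrable_rayPow (ha : -1 < a.re) (hb : -1 < b.re) (θ : ℝ) :
    IntervalIntegrable (rayPow a b θ) volume 0 1 :=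
  (intervalIntegrable_rayPow_majorant ha hb).of_norm_le_on_Ioo zero_le_one
    (measurable_rayPow a b θ).aestronglyMeasurable fun _ ht => norm_rayPow_le ht

lemma continuous_integral_rayPow (ha : -1 < a.re) (hb : -1 < b.re) :
    Continuous fun θ => ∫ t in (0 : ℝ)..1, rayPow a b θ t := by
  refine intervalIntegral.continuous_of_dominated_interval
    (fun θ => (measurable_rayPow a b θ).aestronglyMeasurable)
    (fun θ => ae_imp_of_forall_Ioo zero_le_one fun t ht => norm_rayPow_le (θ := θ) ht)
    (intervalIntegrable_rayPow_majorant ha hb)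
    (ae_imp_of_forall_Ioo zero_le_one fun t ht => continuous_const.mul
      (Continuous.cpow (by fun_prop) continuous_const
        fun θ => Or.inl (re_one_sub_mul_exp_pos ht.1.le ht.2)))

lemma hasDerivAt_rayBeta (hx : 0 < x.re) (hy : 0 < y.re) {θ₀ : ℝ} (hθ₀ : Real.cos θ₀ < 1) :
    HasDerivAt (rayBeta x y)
      (-I * (y - 1) * cexp (θ₀ * I) * ∫ t in (0 : ℝ)..1, rayPow x (y - 2) θ₀ t) θ₀ := by
  set c := (1 + Real.cos θ₀) / 2 with hc_def
  have hc : c < 1 := by linarith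
  have hs : {θ | Real.cos θ < c} ∈ 𝓝 θ₀ :=
    Real.continuous_cos.continuousAt.eventually_lt continuousAt_const (by linarith)
  have hderiv := intervalIntegral.hasDerivAt_integral_of_dominated_loc_of_deriv_le
    (F := fun θ t => rayPow (x - 1) (y - 1) θ t)
    (F' := fun (θ : ℝ) t => -I * (y - 1) * cexp (θ * I) * rayPow x (y - 2) θ t)
    (bound := fun _ => ‖y - 1‖ *
      ((((1 - c) / 2) ^ (y - 2).re + 2 ^ (y - 2).re) * Real.exp (π * |(y - 2).im|)))
    hs (Eventually.of_forall fun θ => (measurable_rayPow _ _ θ).aestronglyMeasurable)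
    (intervalIntegrable_rayPow (by simpa using hx) (by simpa using hy) θ₀)
    ((measurable_rayPow x (y - 2) θ₀).const_mul _).aestronglyMeasurable
    (ae_imp_of_forall_Ioo zero_le_one fun t ht θ hθ => ?_) intervalIntegrable_const
    (ae_imp_of_forall_Ioo zero_le_one fun t ht θ _ => ?_)
  · rw [← intervalIntegral.integral_const_mul]
    exact hderiv.2
  · rw [norm_mul, norm_mul, norm_mul, norm_neg, norm_I, norm_exp_ofReal_mul_I, one_mul, mul_one]
    exact mul_le_mul_of_nonneg_left (norm_rayPow_le_of_cos_le hc hx.le ht (le_of_lt hθ))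
      (norm_nonneg _)
  · simpa [sub_sub, one_add_one_eq_two] using hasDerivAt_rayPow_angle (x - 1) (y - 1) ht θ

-- Integrate `∂ₜ (t ^ x * (1 - t e^{iθ}) ^ (y - 1))` over `[0, 1]`.
lemma one_sub_exp_cpow_eq (hx : 0 < x.re) (hy : 0 < y.re) {θ : ℝ} (hθ : Real.cos θ < 1) :
    (1 - cexp (θ * I)) ^ (y - 1) =
      x * rayBeta x y θ - (y - 1) * cexp (θ * I) * ∫ t in (0 : ℝ)..1, rayPow x (y - 2) θ t := by
  have hx0 : x ≠ 0 := fun h => by simp [h] at hx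
  have hre {t : ℝ} (ht : t ∈ Icc (0 : ℝ) 1) : 0 < (1 - t * cexp (θ * I)).re := by
    linarith [one_sub_cos_div_two_le_re_one_sub_mul_exp (θ := θ) ht.1 ht.2]
  have hint₁ := (intervalIntegrable_rayPow (a := x - 1) (b := y - 1) (by simpa using hx)
    (by simpa using hy) θ).const_mul x
  have hint₂ := ((continuousOn_rayPow hx (y - 2) hθ).intervalIntegrable_of_Icc
    (μ := volume) zero_le_one).const_mul ((y - 1) * cexp (θ * I))
  have hftc := intervalIntegral.integral_eq_sub_of_hasDerivAt_of_le zero_le_one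
    (continuousOn_rayPow hx (y - 1) hθ)
    (fun t ht => by
      simpa [sub_sub, one_add_one_eq_two] using
        hasDerivAt_rayPow_radius x (y - 1) θ ht.1 (hre (Ioo_subset_Icc_self ht)))
    (hint₁.sub hint₂)
  rw [intervalIntegral.integral_sub hint₁ hint₂, intervalIntegral.integral_const_mul,
    intervalIntegral.integral_const_mul] at hftc
  have hend₁ : rayPow x (y - 1) θ 1 = (1 - cexp (θ * I)) ^ (y - 1) := by simp [rayPow]
  have hend₀ : rayPow x (y - 1) θ 0 = 0 := by simp [rayPow, zero_cpow hx0]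
  rw [hend₁, hend₀, sub_zero] at hftc
  rw [rayBeta, ← hftc]

lemma hasDerivAt_exp_mul_rayBeta (hx : 0 < x.re) (hy : 0 < y.re) {θ : ℝ}
    (hθ : Real.cos θ < 1) :
    HasDerivAt (fun θ : ℝ => cexp (I * x * θ) * rayBeta x y θ)
      (I * (cexp (I * x * θ) * (1 - cexp (θ * I)) ^ (y - 1))) θ := by
  have hexp : HasDerivAt (fun θ : ℝ => cexp (I * x * θ)) (I * x * cexp (I * x * θ)) θ := by
    simpa [mul_comm] using ((hasDerivAt_id (θ : ℂ)).const_mul (I * x)).cexp.comp_ofReal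
  refine (hexp.mul (hasDerivAt_rayBeta hx hy hθ)).congr_deriv ?_
  rw [one_sub_exp_cpow_eq hx hy hθ]
  ring

lemma norm_exp_I_mul_mul_le (x : ℂ) {θ : ℝ} (h0 : 0 ≤ θ) (h1 : θ ≤ 2 * π) :
    ‖cexp (I * x * θ)‖ ≤ Real.exp (2 * π * |x.im|) := by
  rw [norm_exp]
  gcongr
  have hre : (I * x * θ).re = -x.im * θ := by simp
  rw [hre]
  nlinarith [neg_abs_le x.im, abs_nonneg x.im]

lemma intervalIntegrable_exp_mul_one_sub_exp_cpow (x : ℂ) (hy : 0 < y.re) :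
    IntervalIntegrable (fun θ : ℝ => cexp (I * x * θ) * (1 - cexp (θ * I)) ^ (y - 1))
      volume 0 (2 * π) := by
  have hpi := pi_pos
  set s := y.re - 1 with hs
  have hbeta : IntervalIntegrable (fun θ : ℝ => (θ / (2 * π)) ^ s * (1 - θ / (2 * π)) ^ s)
      volume 0 (2 * π) := by
    have := (intervalIntegrable_rpow_mul_one_sub_rpow (a := s) (b := s) (by linarith)
      (by linarith)).comp_mul_right (c := (2 * π)⁻¹)
    simpa only [zero_div, one_div, inv_inv, ← div_eq_mul_inv] using this
  have hmajorant := (((hbeta.const_mul (4 ^ s)).add (intervalIntegrable_const (c := 2 ^ s))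
    ).mul_const (Real.exp (π * |y.im|))).const_mul (Real.exp (2 * π * |x.im|))
  refine hmajorant.of_norm_le_on_Ioo (by positivity) (by fun_prop) fun θ hθ => ?_
  have hu₀ : 0 < θ / (2 * π) := by have := hθ.1; positivity
  have hu₁ : 0 < 1 - θ / (2 * π) := by
    rw [sub_pos, div_lt_one (by positivity)]; exact hθ.2
  have hlow := mul_mul_one_sub_le_norm_one_sub_exp hθ.1.le hθ.2.le
  rw [norm_mul]
  refine mul_le_mul (norm_exp_I_mul_mul_le x hθ.1.le hθ.2.le) ?_ (norm_nonneg _) (by positivity)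
  calc ‖(1 - cexp (θ * I)) ^ (y - 1)‖
      ≤ ((4 * (θ / (2 * π)) * (1 - θ / (2 * π))) ^ s + 2 ^ s) * Real.exp (π * |y.im|) := by
        simpa using norm_cpow_le_of_le_norm_le (by positivity) hlow
          (by simpa using norm_one_sub_mul_exp_le_two (t := 1) (θ := θ) zero_le_one le_rfl)
          (y - 1)
    _ = _ := by
        rw [Real.mul_rpow (by positivity) hu₁.le, Real.mul_rpow (by norm_num) hu₀.le]
        ring

lemma rayBeta_zero (x y : ℂ) : rayBeta x y 0 = betaIntegral x y := by
  simp [rayBeta, rayPow, betaIntegral]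

lemma rayBeta_two_pi (x y : ℂ) : rayBeta x y (2 * π) = rayBeta x y 0 := by
  simp [rayBeta, rayPow]

lemma integral_I_mul_exp_mul_one_sub_exp_cpow (hx : 0 < x.re) (hy : 0 < y.re) :
    ∫ θ in (0 : ℝ)..2 * π, I * (cexp (I * x * θ) * (1 - cexp (θ * I)) ^ (y - 1)) =
      (cexp (2 * π * I * x) - 1) * betaIntegral x y := by
  have hftc := intervalIntegral.integral_eq_sub_of_hasDeriv_right_of_le
    (f := fun θ : ℝ => cexp (I * x * θ) * rayBeta x y θ) (by positivity)
    ((by fun_prop : Continuous fun θ : ℝ => cexp (I * x * θ)).mul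
      (continuous_integral_rayPow (a := x - 1) (b := y - 1) (by simpa using hx)
        (by simpa using hy))).continuousOn
    (fun θ hθ => (hasDerivAt_exp_mul_rayBeta hx hy
      (cos_lt_one_of_mem_Ioo hθ.1 hθ.2)).hasDerivWithinAt)
    ((intervalIntegrable_exp_mul_one_sub_exp_cpow x hy).const_mul I)
  rw [hftc, rayBeta_two_pi, rayBeta_zero, ofReal_zero, mul_zero, Complex.exp_zero]
  push_cast
  ring_nf

end RayBeta

theorem stmt_18_general (x y : ℂ) (hx : 0 < x.re) (hy : 0 < y.re) :
    (1 - Complex.exp (2 * Real.pi * Complex.I * x)) * Complex.betaIntegral x y =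
      -Complex.I *
        ∫ θ in (0:ℝ)..(2 * Real.pi),
          Complex.exp (Complex.I * x * θ) *
            ((1 : ℂ) - Real.cos θ - Complex.I * Real.sin θ) ^ (y - 1) := by
  have hcircle (θ : ℝ) : (1 : ℂ) - Real.cos θ - I * Real.sin θ = 1 - cexp (θ * I) := by
    rw [exp_mul_I, ← ofReal_cos, ← ofReal_sin]
    ring
  have hftc := integral_I_mul_exp_mul_one_sub_exp_cpow hx hy
  rw [intervalIntegral.integral_const_mul] at hftc
  simp_rw [hcircle]
  linear_combination hftc

theorem stmt_18 (x y : ℂ) (hx : 0 < x.re) (hy : 0 < y.re) (hxi : ∀ n : ℤ, x ≠ n) :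
    (1 - Complex.exp (2 * Real.pi * Complex.I * x)) * Complex.betaIntegral x y =
      -Complex.I *
        ∫ θ in (0:ℝ)..(2 * Real.pi),
          Complex.exp (Complex.I * x * θ) *
            ((1 : ℂ) - Real.cos θ - Complex.I * Real.sin θ) ^ (y - 1) :=
  stmt_18_general x y hx hy
end
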